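/- Let D = 1 and A ≥ 2. For any positive integer n, the delay of the NAF representation of n differs from the minimum delay over all representations of n over {-1,0,1} (of the same length) by at most 1. -/

import Mathlib

noncomputable def T (D A : ℝ) (d : ℕ → ℤ) : ℕ → ℝ
  | 0 => if d 0 = 0 then 0 else (((d 0).natAbs : ℝ) - 1) * A
  | i + 1 =>
      if d (i + 1) = 0 then T D A d i
      else if ∀ j < i + 1, d j = 0 then
        ((i : ℝ) + 1) * D + (((d (i + 1)).natAbs : ℝ) - 1) * A
      else max (T D A d i) (((i : ℝ) + 1) * D) + ((d (i + 1)).natAbs : ℝ) * A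

noncomputable def delta (A : ℝ) (d : ℕ → ℤ) : ℕ → ℝ
  | 0 => 0
  | i + 1 =>
      if d (i + 1) = 0 then delta A d i - 1
      else if ∀ j < i + 1, d j = 0 then 0
      else max (delta A d i + (A - 1)) A

def val (d : ℕ → ℤ) (lam : ℕ) : ℤ := ∑ i ∈ Finset.range (lam + 1), d i * 2 ^ i

/-! Since `d` and the NAF `dn` have the same value, `val d i - val dn i = c * 2 ^ (i + 1)` with
a carry `c ∈ {-1, 0, 1}`, and the two digits at `i + 1` are both zero or both nonzero exactly when
there is no carry at `i`. Without a carry the two delays evolve in lockstep. With a carry exactly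
one of the digits at `i + 1` is nonzero. If it is the NAF's, the NAF digit at `i` is zero, so at
`i` the representation `d` has just performed an addition that the NAF has not; this leaves the
credit `δ(dn) + A ≤ δ(d) + 1` that absorbs the NAF's addition at `i + 1`. -/

lemma val_zero (d : ℕ → ℤ) : val d 0 = d 0 := by
  simp [val]

lemma val_succ (d : ℕ → ℤ) (i : ℕ) : val d (i + 1) = val d i + d (i + 1) * 2 ^ (i + 1) :=
  Finset.sum_range_succ _ _

lemma abs_val_lt {d : ℕ → ℤ} (hd : ∀ i, d i = -1 ∨ d i = 0 ∨ d i = 1) (i : ℕ) :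
    |val d i| < 2 ^ (i + 1) := by
  induction i with
  | zero => rcases hd 0 with h | h | h <;> simp [val_zero, h]
  | succ i ih =>
    rw [abs_lt] at ih ⊢
    rw [val_succ, pow_succ 2 (i + 1)]
    rcases hd (i + 1) with h | h | h <;> rw [h] <;> constructor <;> linarith

lemma val_eq_zero_of_forall_eq_zero {d : ℕ → ℤ} {i : ℕ} (h : ∀ j < i + 1, d j = 0) :
    val d i = 0 :=
  Finset.sum_eq_zero fun j hj => by rw [h j (Finset.mem_range.mp hj), zero_mul]

lemma val_eq_zero_iff {d : ℕ → ℤ} (hd : ∀ i, d i = -1 ∨ d i = 0 ∨ d i = 1) (i : ℕ) :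
    val d i = 0 ↔ ∀ j < i + 1, d j = 0 := by
  refine ⟨fun h => ?_, val_eq_zero_of_forall_eq_zero⟩
  induction i with
  | zero =>
    intro j hj
    obtain rfl : j = 0 := by omega
    rwa [val_zero] at h
  | succ i ih =>
    have hlt := abs_lt.mp (abs_val_lt hd i)
    rw [val_succ] at h
    have hdi : d (i + 1) = 0 := by
      rcases hd (i + 1) with h' | h' | h' <;> rw [h'] at h <;> first | exact h' | linarith
    rw [hdi, zero_mul, add_zero] at h
    intro j hj
    rcases Nat.lt_succ_iff_lt_or_eq.mp hj with hj | rfl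
    exacts [ih h j hj, hdi]

lemma delta_succ_of_eq_zero (A : ℝ) {d : ℕ → ℤ} {i : ℕ} (h : d (i + 1) = 0) :
    delta A d (i + 1) = delta A d i - 1 := by
  rw [delta, if_pos h]

lemma delta_succ_of_val_eq_zero (A : ℝ) {d : ℕ → ℤ} (hd : ∀ i, d i = -1 ∨ d i = 0 ∨ d i = 1)
    {i : ℕ} (h : d (i + 1) ≠ 0) (hv : val d i = 0) : delta A d (i + 1) = 0 := by
  rw [delta, if_neg h, if_pos ((val_eq_zero_iff hd i).mp hv)]

lemma delta_succ_of_val_ne_zero (A : ℝ) {d : ℕ → ℤ} {i : ℕ} (h : d (i + 1) ≠ 0)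
    (hv : val d i ≠ 0) : delta A d (i + 1) = max (delta A d i + (A - 1)) A := by
  rw [delta, if_neg h, if_neg (mt val_eq_zero_of_forall_eq_zero hv)]

lemma pow_dvd_val_add_sub_val (d : ℕ → ℤ) (i k : ℕ) :
    (2 : ℤ) ^ (i + 1) ∣ val d (i + k) - val d i := by
  induction k with
  | zero => simp
  | succ k ih =>
    rw [← add_assoc, val_succ, add_sub_right_comm]
    exact dvd_add ih (dvd_mul_of_dvd_right (pow_dvd_pow 2 (by omega)) _)

lemma exists_carry {d d' : ℕ → ℤ} (hd : ∀ i, d i = -1 ∨ d i = 0 ∨ d i = 1)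
    (hd' : ∀ i, d' i = -1 ∨ d' i = 0 ∨ d' i = 1) {lam i : ℕ} (heq : val d lam = val d' lam)
    (hi : i ≤ lam) : ∃ c : ℤ, -1 ≤ c ∧ c ≤ 1 ∧ val d i - val d' i = c * 2 ^ (i + 1) := by
  obtain ⟨k, rfl⟩ := Nat.exists_eq_add_of_le hi
  obtain ⟨c, hc⟩ : (2 : ℤ) ^ (i + 1) ∣ val d i - val d' i := by
    have h := dvd_sub (pow_dvd_val_add_sub_val d' i k) (pow_dvd_val_add_sub_val d i k)
    rwa [heq, sub_sub_sub_cancel_left] at h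
  have hp : (0 : ℤ) < 2 ^ (i + 1) := by positivity
  have h := abs_lt.mp (abs_val_lt hd i)
  have h' := abs_lt.mp (abs_val_lt hd' i)
  refine ⟨c, ?_, ?_, by rw [hc, mul_comm]⟩ <;> nlinarith

lemma digit_eq_zero_iff_iff_val_eq {d d' : ℕ → ℤ} (hd : ∀ i, d i = -1 ∨ d i = 0 ∨ d i = 1)
    (hd' : ∀ i, d' i = -1 ∨ d' i = 0 ∨ d' i = 1) {lam i : ℕ} (heq : val d lam = val d' lam)
    (hi : i < lam) : (d (i + 1) = 0 ↔ d' (i + 1) = 0) ↔ val d i = val d' i := by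
  obtain ⟨c, hc1, hc2, hc⟩ := exists_carry hd hd' heq hi.le
  obtain ⟨c', hc1', hc2', hc'⟩ := exists_carry (i := i + 1) hd hd' heq hi
  have hp : (2 : ℤ) ^ (i + 1) ≠ 0 := by positivity
  have hcarry : 2 * c' = c + d (i + 1) - d' (i + 1) := by
    rw [val_succ, val_succ] at hc'
    exact mul_right_cancel₀ hp (by linear_combination hc - hc')
  rw [← sub_eq_zero (a := val d i), hc, mul_eq_zero, or_iff_left hp]
  rcases hd (i + 1) with h | h | h <;> rcases hd' (i + 1) with h' | h' | h' <;> omega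

lemma val_ne_zero_of_val_ne {d d' : ℕ → ℤ} (hd : ∀ i, d i = -1 ∨ d i = 0 ∨ d i = 1)
    (hd' : ∀ i, d' i = -1 ∨ d' i = 0 ∨ d' i = 1) {lam i : ℕ} (heq : val d lam = val d' lam)
    (hi : i ≤ lam) (hne : val d i ≠ val d' i) : val d i ≠ 0 := by
  obtain ⟨c, hc1, hc2, hc⟩ := exists_carry hd hd' heq hi
  intro h0
  have hp : (0 : ℤ) < 2 ^ (i + 1) := by positivity
  have h' := abs_lt.mp (abs_val_lt hd' i)
  rcases (show c = -1 ∨ c = 0 ∨ c = 1 by omega) with rfl | rfl | rfl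
  · linarith
  · exact hne (by linarith)
  · linarith

def DelayBound (A : ℝ) (d dn : ℕ → ℤ) (i : ℕ) : Prop :=
  delta A dn i ≤ delta A d i + 1 ∧
    (val d i ≠ val dn i → dn i = 0 → delta A dn i + A ≤ delta A d i + 1 ∧ A ≤ delta A d i)

lemma delayBound_zero (A : ℝ) {d dn : ℕ → ℤ} (hd : ∀ i, d i = -1 ∨ d i = 0 ∨ d i = 1)
    (hdn : ∀ i, dn i = -1 ∨ dn i = 0 ∨ dn i = 1) {lam : ℕ} (heq : val d lam = val dn lam) :
    DelayBound A d dn 0 := by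
  refine ⟨by simp [delta], fun hne h0 => absurd ?_ (val_ne_zero_of_val_ne hdn hd heq.symm
    (Nat.zero_le lam) (Ne.symm hne))⟩
  rw [val_zero, h0]

lemma delayBound_succ_of_val_eq (A : ℝ) {d dn : ℕ → ℤ} (hd : ∀ i, d i = -1 ∨ d i = 0 ∨ d i = 1)
    (hdn : ∀ i, dn i = -1 ∨ dn i = 0 ∨ dn i = 1) {i : ℕ} (hE : val d i = val dn i)
    (hz : d (i + 1) = 0 ↔ dn (i + 1) = 0) (ih : delta A dn i ≤ delta A d i + 1) :
    DelayBound A d dn (i + 1) := by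
  by_cases hf : dn (i + 1) = 0
  · have he := hz.mpr hf
    have hE' : val d (i + 1) = val dn (i + 1) := by rw [val_succ, val_succ, he, hf, hE]
    rw [DelayBound, delta_succ_of_eq_zero A he, delta_succ_of_eq_zero A hf]
    exact ⟨by linarith, fun h => absurd hE' h⟩
  · have he : d (i + 1) ≠ 0 := mt hz.mp hf
    refine ⟨?_, fun _ h => absurd h hf⟩
    by_cases h0 : val dn i = 0
    · rw [delta_succ_of_val_eq_zero A hd he (hE.trans h0), delta_succ_of_val_eq_zero A hdn hf h0]
      norm_num
    · rw [delta_succ_of_val_ne_zero A he (hE ▸ h0), delta_succ_of_val_ne_zero A hf h0]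
      exact max_le (by linarith [le_max_left (delta A d i + (A - 1)) A])
        (by linarith [le_max_right (delta A d i + (A - 1)) A])

lemma delayBound_succ_of_val_ne {A : ℝ} (hA : 0 ≤ A) {d dn : ℕ → ℤ} {i : ℕ}
    (hnaf : dn i * dn (i + 1) = 0) (hvd : val d i ≠ 0) (hvdn : val dn i ≠ 0)
    (hz : d (i + 1) = 0 ↔ dn (i + 1) ≠ 0) (ih : DelayBound A d dn i)
    (hne : val d i ≠ val dn i) : DelayBound A d dn (i + 1) := by
  obtain ⟨ih, ihcarry⟩ := ih
  by_cases hf : dn (i + 1) = 0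
  · have he : d (i + 1) ≠ 0 := fun h => hz.mp h hf
    rw [DelayBound, delta_succ_of_eq_zero A hf, delta_succ_of_val_ne_zero A he hvd]
    have := le_max_left (delta A d i + (A - 1)) A
    exact ⟨by linarith, fun _ _ => ⟨by linarith, le_max_right _ _⟩⟩
  · have he := hz.mpr hf
    have hprev : dn i = 0 := (mul_eq_zero.mp hnaf).resolve_right hf
    obtain ⟨hcredit, hAd⟩ := ihcarry hne hprev
    rw [DelayBound, delta_succ_of_eq_zero A he, delta_succ_of_val_ne_zero A hf hvdn]
    exact ⟨max_le (by linarith) (by linarith), fun _ h => absurd h hf⟩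

lemma delayBound_of_le {A : ℝ} (hA : 0 ≤ A) {d dn : ℕ → ℤ}
    (hd : ∀ i, d i = -1 ∨ d i = 0 ∨ d i = 1) (hdn : ∀ i, dn i = -1 ∨ dn i = 0 ∨ dn i = 1)
    (hnaf : ∀ i, dn i * dn (i + 1) = 0) {lam : ℕ} (heq : val d lam = val dn lam) :
    ∀ i ≤ lam, DelayBound A d dn i := by
  intro i
  induction i with
  | zero => exact fun _ => delayBound_zero A hd hdn heq
  | succ i ih =>
    intro (hi : i < lam)
    have hpar := digit_eq_zero_iff_iff_val_eq hd hdn heq hi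
    by_cases hE : val d i = val dn i
    · exact delayBound_succ_of_val_eq A hd hdn hE (hpar.mpr hE) (ih hi.le).1
    · refine delayBound_succ_of_val_ne hA (hnaf i) (val_ne_zero_of_val_ne hd hdn heq hi.le hE)
        (val_ne_zero_of_val_ne hdn hd heq.symm hi.le (Ne.symm hE))
        (not_iff_comm.mp (not_iff.mp (mt hpar.mp hE))).symm (ih hi.le) hE

theorem stmt19_general (A : ℝ) (hA : 2 ≤ A) (n lam : ℕ)
    (dn d : ℕ → ℤ)
    (hdn : ∀ i, dn i = -1 ∨ dn i = 0 ∨ dn i = 1)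
    (hnaf : ∀ i, dn i * dn (i + 1) = 0)
    (hdnval : val dn lam = (n : ℤ))
    (hd : ∀ i, d i = -1 ∨ d i = 0 ∨ d i = 1)
    (hdval : val d lam = (n : ℤ)) :
    delta A dn lam ≤ delta A d lam + 1 :=
  (delayBound_of_le (by linarith) hd hdn hnaf (hdval.trans hdnval.symm) lam le_rfl).1

/-- For D = 1 and A ≥ 2, the delay of the NAF representation of n exceeds
the delay of any {-1,0,1}-representation of n of the same length by at
most 1. -/
theorem stmt19 (A : ℝ) (hA : 2 ≤ A) (n lam : ℕ) (hn : 0 < n)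
    (dn d : ℕ → ℤ)
    (hdn : ∀ i, dn i = -1 ∨ dn i = 0 ∨ dn i = 1)
    (hnaf : ∀ i, dn i * dn (i + 1) = 0)
    (hdnhigh : ∀ i, lam < i → dn i = 0)
    (hdnval : val dn lam = (n : ℤ))
    (hd : ∀ i, d i = -1 ∨ d i = 0 ∨ d i = 1)
    (hdhigh : ∀ i, lam < i → d i = 0)
    (hdval : val d lam = (n : ℤ)) :
    delta A dn lam ≤ delta A d lam + 1 :=
  stmt19_general A hA n lam dn d hdn hnaf hdnval hd hdval
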